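/- arXiv:1504.06068 — 3 statements merged into one kernel-verified Lean document; each statement's English description precedes it below -/
import Mathlib

section
/- For vectors μ, x ∈ ℝⁿ and c > 0, with z ∈ ℝⁿ defined componentwise by zᵢ = max(0, (μᵢ + c xᵢ)/c), the identity ⟨μ, x - z⟩ + (c/2)‖x - z‖₂² = (1/(2c)) ( ‖min(μ + c x, 0)‖₂² - ‖μ‖₂² ) holds, where the minimum is taken componentwise. -/
theorem augmented_term_value_vector (n : ℕ) (mu x : Fin n → ℝ) (c : ℝ) (hc : 0 < c) :
    let z : Fin n → ℝ := fun i => max 0 ((mu i + c * x i) / c)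
    (∑ i, mu i * (x i - z i)) + c / 2 * (∑ i, (x i - z i) ^ 2)
      = (1 / (2 * c)) * ((∑ i, (min (mu i + c * x i) 0) ^ 2) - ∑ i, (mu i) ^ 2) := by
  intro z
  rw [Finset.mul_sum, ← Finset.sum_add_distrib, ← Finset.sum_sub_distrib, Finset.mul_sum]
  apply Finset.sum_congr rfl
  intro i _
  have hc' : c ≠ 0 := ne_of_gt hc
  show mu i * (x i - z i) + c / 2 * (x i - z i) ^ 2
      = 1 / (2 * c) * (min (mu i + c * x i) 0 ^ 2 - mu i ^ 2)
  rcases le_or_gt (mu i + c * x i) 0 with h | h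
  · have hz : z i = 0 := by
      simp only [z, max_eq_left_iff]
      exact div_nonpos_of_nonpos_of_nonneg h hc.le
    rw [hz, min_eq_left h]
    field_simp
    ring
  · have hz : z i = (mu i + c * x i) / c := by
      simp only [z, max_eq_right_iff]
      positivity
    rw [hz, min_eq_right h.le]
    field_simp
    ring
end

section
/- Let F : ℝⁿ → ℝ be convex. Then x ≥ 0 (componentwise) minimizes F over the nonnegative orthant if and only if there exists μ ∈ ℝⁿ such that -μ ∈ ∂F(x) and μ = min(μ + c x, 0) componentwise, for any fixed c > 0. -/
/-!
If `-μ` is a subgradient at `x` with `μ ≤ 0` and `μ i * x i = 0`, then `-μ ⬝ (y - x) ≥ 0` on the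
orthant, so `x` is a minimizer. Conversely, separate the open convex strict epigraph of `F` from
`orthant ×ˢ Iic (F x)`: since `(x, F x)` lies in the second set and `(x, F x + 1)` in the first,
the separating hyperplane is not vertical, hence it is the graph of an affine minorant of `F`
touching at `x`, i.e. a subgradient `g`, and `g (y - x) ≥ 0` on the orthant. On the orthant this
says `g ≥ 0` and `g i * x i = 0`, which for `c > 0` is the identity `μ = min (μ + c x) 0` with
`μ = -g`.
-/

open Set

section Orthant

variable {R : Type*} [Ring R] [LinearOrder R] [IsStrictOrderedRing R]

theorem eq_min_add_mul_zero_iff {c x μ : R} (hc : 0 < c) (hx : 0 ≤ x) :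
    μ = min (μ + c * x) 0 ↔ μ ≤ 0 ∧ μ * x = 0 := by
  constructor
  · intro h
    refine ⟨h ▸ min_le_right _ _, ?_⟩
    rcases min_choice (μ + c * x) 0 with hmin | hmin <;> rw [hmin] at h
    · have hcx : c * x = 0 := by simpa using h.symm
      simp [(mul_eq_zero.1 hcx).resolve_left hc.ne']
    · simp [h]
  · rintro ⟨hμ, hμx⟩
    rcases mul_eq_zero.1 hμx with rfl | rfl
    · simp [mul_nonneg hc.le hx]
    · simp [hμ]

variable {ι : Type*} [Fintype ι] [DecidableEq ι]

theorem forall_nonneg_sum_mul_sub_nonneg_iff {a x : ι → R} (hx : 0 ≤ x) :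
    (∀ y : ι → R, 0 ≤ y → 0 ≤ ∑ i, a i * (y i - x i)) ↔ ∀ i, 0 ≤ a i ∧ a i * x i = 0 := by
  constructor
  · intro h i
    have ha : 0 ≤ a i := by
      simpa [Pi.single_apply] using h (x + Pi.single i 1) (le_add_of_le_of_nonneg hx (by simp))
    have hax : 0 ≤ -(a i * x i) := by
      have := h (Function.update x i 0) (le_update_iff.2 ⟨le_rfl, fun j _ => hx j⟩)
      simpa [Function.update_apply, ite_sub, mul_ite] using this
    exact ⟨ha, le_antisymm (neg_nonneg.1 hax) (mul_nonneg ha (hx i))⟩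
  · intro h y hy
    refine Finset.sum_nonneg fun i _ => ?_
    rw [mul_sub, (h i).2, sub_zero]
    exact mul_nonneg (h i).1 (hy i)

end Orthant

section Subgradient

variable {E : Type*} [AddCommGroup E] [Module ℝ E] [TopologicalSpace E]

theorem StrongDual.exists_prod_apply_eq_add_mul (f : StrongDual ℝ (E × ℝ)) :
    ∃ (φ : StrongDual ℝ E) (β : ℝ), ∀ p, f p = φ p.1 + p.2 * β := by
  refine ⟨f.comp (.inl ℝ E ℝ), f (0, 1), fun ⟨y, t⟩ => ?_⟩
  rw [ContinuousLinearMap.comp_apply, ContinuousLinearMap.inl_apply, ← smul_eq_mul, ← map_smul,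
    ← map_add, Prod.smul_mk, smul_zero, smul_eq_mul, mul_one, Prod.mk_add_mk, add_zero, zero_add]

variable [IsTopologicalAddGroup E] [ContinuousSMul ℝ E]

theorem IsMinOn.exists_subgradient_nonneg_on {F : E → ℝ} {C : Set E} {x : E}
    (hmin : IsMinOn F C x) (hxC : x ∈ C) (hC : Convex ℝ C) (hF : ConvexOn ℝ univ F)
    (hFc : Continuous F) :
    ∃ g : StrongDual ℝ E, (∀ y, F x + g (y - x) ≤ F y) ∧ ∀ y ∈ C, 0 ≤ g (y - x) := by
  have hA : Convex ℝ {p : E × ℝ | F p.1 < p.2} := by simpa using hF.convex_strict_epigraph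
  have hdisj : Disjoint {p : E × ℝ | F p.1 < p.2} (C ×ˢ Iic (F x)) :=
    disjoint_left.2 fun p hpA hpB => (hpA.trans_le (hpB.2.trans (isMinOn_iff.1 hmin _ hpB.1))).false
  obtain ⟨f, u, hfA, hfB⟩ := geometric_hahn_banach_open hA
    (isOpen_lt (hFc.comp continuous_fst) continuous_snd) (hC.prod (convex_Iic (F x))) hdisj
  obtain ⟨φ, β, hf⟩ := f.exists_prod_apply_eq_add_mul
  simp only [mem_ofPred_eq, mem_prod, mem_Iic, and_imp, Prod.forall, hf] at hfA hfB
  have hβ : β < 0 := by linarith [hfA x (F x + 1) (lt_add_one _), hfB x (F x) hxC le_rfl]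
  have hφF : ∀ y, φ y + F y * β ≤ u := by
    intro y
    by_contra! hy
    have := hfA y ((u - φ y) / β) (by rw [lt_div_iff_of_neg hβ]; linarith)
    rw [div_mul_cancel₀ _ hβ.ne] at this
    linarith
  refine ⟨(-β)⁻¹ • φ, fun y => ?_, fun y hy => ?_⟩
  all_goals rw [smul_apply, map_sub, smul_eq_mul]
  · have : (-β)⁻¹ * (φ y - φ x) ≤ F y - F x := by
      rw [inv_mul_le_iff₀ (neg_pos.2 hβ)]
      linarith [hφF y, hfB x (F x) hxC le_rfl]
    linarith
  · exact mul_nonneg (inv_nonneg.2 (neg_nonneg.2 hβ.le))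
      (sub_nonneg.2 (by linarith [hfB y (F x) hy le_rfl, hφF x]))

end Subgradient

theorem StrongDual.exists_pi_apply_eq_sum_mul {ι : Type*} [Fintype ι] [DecidableEq ι]
    (g : StrongDual ℝ (ι → ℝ)) : ∃ a : ι → ℝ, ∀ v, g v = ∑ i, a i * v i :=
  ⟨fun i => g (Pi.single i 1), fun v => by
    conv_lhs => rw [pi_eq_sum_univ' v]
    simp [mul_comm]⟩

theorem kkt_nonneg_orthant (n : ℕ) (F : (Fin n → ℝ) → ℝ)
    (hF : ConvexOn ℝ Set.univ F) (c : ℝ) (hc : 0 < c)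
    (x : Fin n → ℝ) (hx : ∀ i, 0 ≤ x i) :
    (∀ y : Fin n → ℝ, (∀ i, 0 ≤ y i) → F x ≤ F y) ↔
      ∃ mu : Fin n → ℝ,
        (∀ y : Fin n → ℝ, F x + ∑ i, (-mu i) * (y i - x i) ≤ F y) ∧
        (∀ i, mu i = min (mu i + c * x i) 0) := by
  constructor
  · intro hmin
    obtain ⟨g, hg_sub, hg_nonneg⟩ := (isMinOn_iff.2 hmin).exists_subgradient_nonneg_on hx
      (convex_Ici 0) hF (continuousOn_univ.1 (hF.continuousOn isOpen_univ))
    obtain ⟨a, hg⟩ := g.exists_pi_apply_eq_sum_mul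
    have ha := (forall_nonneg_sum_mul_sub_nonneg_iff hx).1 fun y hy => by
      simpa [hg] using hg_nonneg y hy
    refine ⟨-a, fun y => by simpa [hg] using hg_sub y, fun i => ?_⟩
    exact (eq_min_add_mul_zero_iff hc (hx i)).2 ⟨by simpa using (ha i).1, by simp [(ha i).2]⟩
  · rintro ⟨mu, hsub, hmu⟩ y hy
    have hnormal : 0 ≤ ∑ i, (-mu i) * (y i - x i) :=
      (forall_nonneg_sum_mul_sub_nonneg_iff (a := -mu) hx).2 (fun i => by
        obtain ⟨hmu_nonpos, hmu_x⟩ := (eq_min_add_mul_zero_iff hc (hx i)).1 (hmu i)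
        exact ⟨neg_nonneg.2 hmu_nonpos, by rw [Pi.neg_apply, neg_mul, hmu_x, neg_zero]⟩) y hy
    linarith [hsub y]
end

section
/- Let Y ∈ ℝ^{M×N} and let ι_s be the block-averaging operator onto r^s × r^s blocks (assuming r^s divides M and N), and ι_sᵀ its transpose (which replicates each averaged value over its block). Then for any matrix Z of the coarse size, ‖Y - ι_sᵀ Z‖_F² ≤ r^{2s} ‖ι_s(Y) - Z‖_F² + Σ_{I,J} ‖∇_δ Y_{IJ}‖_F²·C, where the second term bounds the within-block variation: specifically, ‖Y - ι_sᵀ ι_s(Y)‖_F² ≤ C(r,s) Σ_{I,J} ‖∇_δ Y_{IJ}‖_F² by a discrete Poincaré inequality on each block, where ∇_δ is the forward-difference operator and Y_{IJ} are the blocks of Y. -/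
/-- Block-averaging (coarsening) operator `ι_s`: each entry of the coarse matrix is the
average of `Y` over the corresponding `k × k` block. Indices are written as pairs
(block index, within-block index). -/
noncomputable def blockAvg (k m n : ℕ)
    (Y : Fin m × Fin k → Fin n × Fin k → ℝ) : Fin m → Fin n → ℝ :=
  fun I J => (1 / (k : ℝ) ^ 2) * ∑ a : Fin k, ∑ b : Fin k, Y (I, a) (J, b)

/-- The transpose `ι_sᵀ` replicates each coarse value over its block. -/
def blockRefine (k m n : ℕ)
    (Z : Fin m → Fin n → ℝ) : Fin m × Fin k → Fin n × Fin k → ℝ :=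
  fun p q => Z p.1 q.1

/-- Squared Frobenius norm of a fine-scale matrix. -/
noncomputable def frobSqFine (k m n : ℕ)
    (Y : Fin m × Fin k → Fin n × Fin k → ℝ) : ℝ :=
  ∑ p : Fin m × Fin k, ∑ q : Fin n × Fin k, (Y p q) ^ 2

/-- Squared Frobenius norm of a coarse-scale matrix. -/
noncomputable def frobSqCoarse (m n : ℕ) (Z : Fin m → Fin n → ℝ) : ℝ :=
  ∑ I : Fin m, ∑ J : Fin n, (Z I J) ^ 2

/-- Squared Frobenius norm of the forward-difference gradient `∇_δ` of the `(I,J)`-th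
block of `Y` (differences taken within the block). -/
noncomputable def blockGradSq (k m n : ℕ)
    (Y : Fin m × Fin k → Fin n × Fin k → ℝ) (I : Fin m) (J : Fin n) : ℝ :=
  ∑ a : Fin k, ∑ b : Fin k,
    ((if h : a.1 + 1 < k then Y (I, ⟨a.1 + 1, h⟩) (J, b) - Y (I, a) (J, b) else 0) ^ 2 +
     (if h : b.1 + 1 < k then Y (I, a) (J, ⟨b.1 + 1, h⟩) - Y (I, a) (J, b) else 0) ^ 2)

/-! On a `k × k` block `f` with mean `μ`, the bias–variance identity
`∑ (f p - c)² = ∑ (f p - μ)² + k² (μ - c)²` produces the coarse term. The variance is at most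
the average over `q` of `∑ₚ (f p - f q)²`, and joining `p` to `q` along a column and then a row,
Cauchy–Schwarz bounds each `(f p - f q)²` by `2k` times the squared forward differences on
those two lines. This gives the discrete Poincaré inequality with `C = 2k²`. -/

open Finset

section Variance

variable {ι : Type*} [Fintype ι] [Nonempty ι]

theorem sum_sub_sq_eq_sum_sub_mean_sq_add (f : ι → ℝ) (c : ℝ) :
    ∑ i, (f i - c) ^ 2 = ∑ i, (f i - (∑ j, f j) / Fintype.card ι) ^ 2
      + Fintype.card ι * ((∑ j, f j) / Fintype.card ι - c) ^ 2 := by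
  set μ := (∑ j, f j) / Fintype.card ι
  have hN : (Fintype.card ι : ℝ) ≠ 0 := Nat.cast_ne_zero.2 Fintype.card_ne_zero
  have hcentered : ∑ i, (f i - μ) = 0 := by
    rw [sum_sub_distrib, sum_const, card_univ, nsmul_eq_mul, mul_div_cancel₀ _ hN, sub_self]
  calc ∑ i, (f i - c) ^ 2 = ∑ i, ((f i - μ) ^ 2 + 2 * (μ - c) * (f i - μ) + (μ - c) ^ 2) :=
        sum_congr rfl fun i _ => by ring
    _ = _ := by
        rw [sum_add_distrib, sum_add_distrib, ← mul_sum, hcentered, sum_const, card_univ,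
          nsmul_eq_mul, mul_zero, add_zero]

theorem card_mul_sum_sub_mean_sq_le (f : ι → ℝ) :
    Fintype.card ι * ∑ i, (f i - (∑ j, f j) / Fintype.card ι) ^ 2 ≤ ∑ j, ∑ i, (f i - f j) ^ 2 := by
  rw [← nsmul_eq_mul, ← card_univ, ← sum_const]
  refine sum_le_sum fun j _ => ?_
  rw [sum_sub_sq_eq_sum_sub_mean_sq_add f (f j)]
  exact le_add_of_nonneg_right (by positivity)

end Variance

theorem abs_sub_le_sum_abs_sub_succ (g : ℕ → ℝ) {i j K : ℕ} (hi : i ≤ K) (hj : j ≤ K) :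
    |g j - g i| ≤ ∑ l ∈ range K, |g (l + 1) - g l| := by
  wlog hij : i ≤ j generalizing i j
  · rw [abs_sub_comm]; exact this hj hi (by omega)
  rw [← sum_Ico_sub g hij]
  refine (abs_sum_le_sum_abs _ _).trans ?_
  refine sum_le_sum_of_subset_of_nonneg (fun l hl => ?_) fun _ _ _ => abs_nonneg _
  simp only [mem_Ico, mem_range] at hl ⊢
  omega

theorem sq_sub_le_mul_sum_sq_sub_succ (g : ℕ → ℝ) {i j K : ℕ} (hi : i ≤ K) (hj : j ≤ K) :
    (g j - g i) ^ 2 ≤ K * ∑ l ∈ range K, (g (l + 1) - g l) ^ 2 := by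
  calc (g j - g i) ^ 2 = |g j - g i| ^ 2 := (sq_abs _).symm
    _ ≤ (∑ l ∈ range K, |g (l + 1) - g l|) ^ 2 :=
        pow_le_pow_left₀ (abs_nonneg _) (abs_sub_le_sum_abs_sub_succ g hi hj) 2
    _ ≤ K * ∑ l ∈ range K, (g (l + 1) - g l) ^ 2 := by
        simpa only [card_range, sq_abs] using
          sq_sum_le_card_mul_sum_sq (s := range K) (f := fun l => |g (l + 1) - g l|)

def finFwdDiff {k : ℕ} (g : Fin k → ℝ) (i : Fin k) : ℝ :=
  if h : i.1 + 1 < k then g ⟨i.1 + 1, h⟩ - g i else 0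

theorem sq_sub_le_mul_sum_finFwdDiff_sq {k : ℕ} (g : Fin k → ℝ) (a a' : Fin k) :
    (g a - g a') ^ 2 ≤ k * ∑ i, finFwdDiff g i ^ 2 := by
  have hk : 0 < k := a.pos
  -- clamping at the last index makes every forward difference, the last one included, a
  -- difference of consecutive values of `g'`
  let g' : ℕ → ℝ := fun j => g ⟨min j (k - 1), by omega⟩
  have hg' : ∀ i : Fin k, g' i = g i := fun i => congrArg g (Fin.ext (by simp; omega))
  have hdiff : ∀ i : Fin k, finFwdDiff g i = g' (i + 1) - g' i := by
    intro i
    unfold finFwdDiff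
    split_ifs with h
    · rw [hg', ← hg' ⟨i + 1, h⟩]
    · exact (sub_eq_zero.2 (congrArg g (Fin.ext (by simp; omega)))).symm
  rw [← hg' a, ← hg' a', sum_congr rfl fun i _ => by rw [hdiff i],
    Fin.sum_univ_eq_sum_range (fun l => (g' (l + 1) - g' l) ^ 2)]
  exact sq_sub_le_mul_sum_sq_sub_succ g' a'.2.le a.2.le

def gridGradSq {k : ℕ} (f : Fin k × Fin k → ℝ) : ℝ :=
  ∑ a, ∑ b, (finFwdDiff (fun a => f (a, b)) a ^ 2 + finFwdDiff (fun b => f (a, b)) b ^ 2)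

theorem sum_sum_sq_sub_le_gridGradSq {k : ℕ} (f : Fin k × Fin k → ℝ) :
    ∑ q, ∑ p, (f p - f q) ^ 2 ≤ 2 * k ^ 4 * gridGradSq f := by
  set H : Fin k → ℝ := fun b => ∑ a, finFwdDiff (fun a => f (a, b)) a ^ 2
  set V : Fin k → ℝ := fun a => ∑ b, finFwdDiff (fun b => f (a, b)) b ^ 2
  have hgrid : gridGradSq f = ∑ b, H b + ∑ a, V a := by
    simp only [gridGradSq, sum_add_distrib]
    rw [sum_comm]
  have hpath : ∀ p q : Fin k × Fin k, (f p - f q) ^ 2 ≤ 2 * k * H p.2 + 2 * k * V q.1 := by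
    rintro ⟨a, b⟩ ⟨a', b'⟩
    have hcol := sq_sub_le_mul_sum_finFwdDiff_sq (fun a => f (a, b)) a a'
    have hrow := sq_sub_le_mul_sum_finFwdDiff_sq (fun b => f (a', b)) b b'
    nlinarith [sq_nonneg (f (a, b) - 2 * f (a', b) + f (a', b'))]
  calc ∑ q, ∑ p, (f p - f q) ^ 2 ≤ ∑ q : Fin k × Fin k, ∑ p : Fin k × Fin k,
        (2 * k * H p.2 + 2 * k * V q.1) := by gcongr with q _ p _; exact hpath p q
    _ = 2 * k ^ 4 * gridGradSq f := by
        simp only [hgrid, Fintype.sum_prod_type, sum_add_distrib, sum_const, card_univ,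
          Fintype.card_prod, Fintype.card_fin, nsmul_eq_mul, ← mul_sum]
        push_cast
        ring

theorem sum_sq_sub_mean_le_gridGradSq {k : ℕ} [NeZero k] (f : Fin k × Fin k → ℝ) :
    ∑ p, (f p - (∑ q, f q) / Fintype.card (Fin k × Fin k)) ^ 2 ≤ 2 * k ^ 2 * gridGradSq f := by
  have hk : (0 : ℝ) < k ^ 2 := by have := NeZero.pos k; positivity
  have h := (card_mul_sum_sub_mean_sq_le f).trans (sum_sum_sq_sub_le_gridGradSq f)
  rw [Fintype.card_prod, Fintype.card_fin, Nat.cast_mul, ← sq] at h ⊢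
  refine le_of_mul_le_mul_left ?_ hk
  linarith

theorem frobSqFine_eq_sum_blocks (k m n : ℕ) (W : Fin m × Fin k → Fin n × Fin k → ℝ) :
    frobSqFine k m n W = ∑ I, ∑ J, ∑ p : Fin k × Fin k, W (I, p.1) (J, p.2) ^ 2 := by
  simp only [frobSqFine, Fintype.sum_prod_type]
  exact sum_congr rfl fun I _ => sum_comm

theorem blockAvg_eq_mean (k m n : ℕ) (Y : Fin m × Fin k → Fin n × Fin k → ℝ) (I : Fin m)
    (J : Fin n) : blockAvg k m n Y I J =
      (∑ p : Fin k × Fin k, Y (I, p.1) (J, p.2)) / Fintype.card (Fin k × Fin k) := by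
  simp only [blockAvg, Fintype.sum_prod_type, Fintype.card_prod, Fintype.card_fin]
  push_cast
  ring

theorem blockGradSq_eq_gridGradSq (k m n : ℕ) (Y : Fin m × Fin k → Fin n × Fin k → ℝ)
    (I : Fin m) (J : Fin n) :
    blockGradSq k m n Y I J = gridGradSq fun p : Fin k × Fin k => Y (I, p.1) (J, p.2) := rfl

theorem frobSqFine_sub_blockRefine_le {k : ℕ} [NeZero k] (m n : ℕ)
    (Y : Fin m × Fin k → Fin n × Fin k → ℝ) (Z : Fin m → Fin n → ℝ) :
    frobSqFine k m n (fun p q => Y p q - blockRefine k m n Z p q)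
      ≤ (k : ℝ) ^ 2 * frobSqCoarse m n (fun I J => blockAvg k m n Y I J - Z I J) +
        2 * k ^ 2 * ∑ I, ∑ J, blockGradSq k m n Y I J := by
  simp only [frobSqFine_eq_sum_blocks, frobSqCoarse, blockRefine, mul_sum, ← sum_add_distrib]
  gcongr with I _ J _
  have hvar := sum_sq_sub_mean_le_gridGradSq fun p : Fin k × Fin k => Y (I, p.1) (J, p.2)
  have hcard : (Fintype.card (Fin k × Fin k) : ℝ) = k ^ 2 := by simp [sq]
  rw [hcard] at hvar
  rw [sum_sub_sq_eq_sum_sub_mean_sq_add, blockAvg_eq_mean, blockGradSq_eq_gridGradSq, hcard]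
  linarith

theorem multilevel_error_bound (k : ℕ) (hk : 1 ≤ k) :
    ∃ C : ℝ, 0 < C ∧
      ∀ (m n : ℕ) (Y : Fin m × Fin k → Fin n × Fin k → ℝ) (Z : Fin m → Fin n → ℝ),
        (frobSqFine k m n (fun p q => Y p q - blockRefine k m n Z p q)
            ≤ (k : ℝ) ^ 2 *
                frobSqCoarse m n (fun I J => blockAvg k m n Y I J - Z I J) +
              C * ∑ I : Fin m, ∑ J : Fin n, blockGradSq k m n Y I J) ∧
        (frobSqFine k m n (fun p q => Y p q - blockRefine k m n (blockAvg k m n Y) p q)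
            ≤ C * ∑ I : Fin m, ∑ J : Fin n, blockGradSq k m n Y I J) := by
  have : NeZero k := ⟨by omega⟩
  refine ⟨2 * k ^ 2, by positivity, fun m n Y Z => ⟨frobSqFine_sub_blockRefine_le m n Y Z, ?_⟩⟩
  simpa [frobSqCoarse] using frobSqFine_sub_blockRefine_le m n Y (blockAvg k m n Y)
end
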